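/- Let $K$ be a compact Hausdorff space, $\varphi : K \to K$ continuous, and $T_\varphi f = f \circ \varphi$ the composition operator on $C(K)$. If there is a closed set $U \subseteq K$ with nonempty interior such that $\varphi(U)$ has empty interior, then $T_\varphi$ is not order continuous; that is, there exist a decreasing net $f_\alpha \downarrow 0$ in $C(K)$ and $g \in C(K)$ with $g \gneq 0$ such that $T_\varphi f_\alpha \geq g$ for all $\alpha$. -/

import Mathlib

/-!
Let `V = φ(U)`, a closed set with empty interior. The continuous functions `0 ≤ f` with
`f = 1` on `V` form a downward directed set whose infimum in `C(K)` is `0`: any lower bound is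
`≤ 0` at every point off `V` (by Urysohn), hence everywhere since `Vᶜ` is dense. Yet every such
`f ∘ φ` equals `1` on `U`, so it dominates a nonzero bump function supported in `U`.
-/

open Set

namespace ContinuousMap

variable {X : Type*} [TopologicalSpace X]

theorem exists_zero_one_of_notMem_isClosed [CompletelyRegularSpace X] {x : X} {s : Set X}
    (hs : IsClosed s) (hx : x ∉ s) :
    ∃ f : C(X, ℝ), 0 ≤ f ∧ f ≤ 1 ∧ f x = 0 ∧ EqOn f 1 s := by
  obtain ⟨f, hf, hfx, hfs⟩ := CompletelyRegularSpace.completely_regular x s hs hx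
  exact ⟨⟨fun y => f y, continuous_subtype_val.comp hf⟩, fun y => (f y).2.1, fun y => (f y).2.2,
    by simp [hfx], fun y hy => by simp [hfs hy]⟩

theorem exists_bump_of_mem_interior [CompletelyRegularSpace X] {x : X} {s : Set X}
    (hx : x ∈ interior s) :
    ∃ g : C(X, ℝ), 0 ≤ g ∧ g ≤ 1 ∧ g x = 1 ∧ EqOn g 0 (interior s)ᶜ := by
  obtain ⟨f, hf0, hf1, hfx, hfs⟩ :=
    exists_zero_one_of_notMem_isClosed isOpen_interior.isClosed_compl (not_not.mpr hx)
  refine ⟨1 - f, sub_nonneg.mpr hf1, sub_le_self 1 hf0, by simp [hfx], fun y hy => ?_⟩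
  simp [hfs hy]

def nonnegOneOn (V : Set X) : Set C(X, ℝ) := {f | 0 ≤ f ∧ EqOn f 1 V}

theorem one_mem_nonnegOneOn (V : Set X) : 1 ∈ nonnegOneOn V :=
  ⟨zero_le_one, eqOn_refl _ _⟩

theorem directedOn_nonnegOneOn (V : Set X) : DirectedOn (· ≥ ·) (nonnegOneOn V) := by
  rintro f ⟨hf0, hf1⟩ g ⟨hg0, hg1⟩
  refine ⟨f ⊓ g, ⟨le_inf hf0 hg0, fun y hy => ?_⟩, inf_le_left, inf_le_right⟩
  simp [hf1 hy, hg1 hy]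

theorem isGLB_nonnegOneOn_zero [CompletelyRegularSpace X] {V : Set X} (hV : IsClosed V)
    (hV' : interior V = ∅) : IsGLB (nonnegOneOn V) 0 := by
  refine ⟨fun f hf => hf.1, fun h hh x => ?_⟩
  have hle_off : Vᶜ ⊆ {y | h y ≤ 0} := by
    intro y hy
    obtain ⟨f, hf0, -, hfy, hfV⟩ := exists_zero_one_of_notMem_isClosed hV hy
    simpa [hfy] using hh ⟨hf0, hfV⟩ y
  have hle : closure Vᶜ ⊆ {y | h y ≤ 0} :=
    (isClosed_le h.continuous continuous_const).closure_subset_iff.mpr hle_off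
  rw [(interior_eq_empty_iff_dense_compl.mp hV').closure_eq] at hle
  exact hle (mem_univ x)

end ContinuousMap

open ContinuousMap in
theorem stmt2 {K : Type*} [TopologicalSpace K] [CompactSpace K] [T2Space K]
    (φ : C(K, K))
    (hU : ∃ U : Set K, IsClosed U ∧ (interior U).Nonempty ∧
      interior ((φ : K → K) '' U) = ∅) :
    ∃ D : Set C(K, ℝ), D.Nonempty ∧ DirectedOn (fun f g => g ≤ f) D ∧
      IsGLB D 0 ∧
      ∃ g : C(K, ℝ), 0 ≤ g ∧ g ≠ 0 ∧ ∀ f ∈ D, g ≤ f.comp φ := by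
  obtain ⟨U, hUc, ⟨x₀, hx₀⟩, hφU⟩ := hU
  have hφUc : IsClosed (φ '' U) := (hUc.isCompact.image φ.continuous).isClosed
  obtain ⟨g, hg0, hg1, hgx₀, hg_off⟩ := exists_bump_of_mem_interior hx₀
  refine ⟨nonnegOneOn (φ '' U), ⟨1, one_mem_nonnegOneOn _⟩, directedOn_nonnegOneOn _,
    isGLB_nonnegOneOn_zero hφUc hφU, g, hg0, fun hg => by simp [hg] at hgx₀, ?_⟩
  rintro f ⟨hf0, hf1⟩ x
  by_cases hx : x ∈ U
  · simpa [hf1 (mem_image_of_mem φ hx)] using hg1 x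
  · simpa [hg_off (fun h => hx (interior_subset h))] using hf0 (φ x)
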